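/- Let f : ℝ → ℝ be given by f(x) = x² − x − 3. Then in ℝ the closure of the set {3} ∪ ⋃_{i=0}^∞ f^{−i}(0) ∪ ⋃_{j=0}^∞ f^{−j}(−2) equals the closure of ⋃_{i=0}^∞ f^{−i}(0). (Hence the spectrum of the orbital Schreier graph Γ of the Hanoi Towers group on three pegs, which equals the former closure, is equal to the closure of ⋃_{i=0}^∞ f^{−i}(0).) -/
import Mathlib

/-- The quadratic polynomial `f(x) = x² - x - 3`. -/
noncomputable def hanoiF (x : ℝ) : ℝ := x ^ 2 - x - 3

namespace HanoiAux

noncomputable def S : Set ℝ := ⋃ i : ℕ, hanoiF^[i] ⁻¹' {(0 : ℝ)}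

lemma gt3 : ∀ (k : ℕ) (u : ℝ), 3 < u → 3 < hanoiF^[k] u := by
  intro k
  induction k with
  | zero => intro u hu; simpa using hu
  | succ k ih =>
    intro u hu
    rw [Function.iterate_succ_apply]
    exact ih _ (by simp only [hanoiF]; nlinarith)

lemma S_sub : S ⊆ Set.Icc (-2 : ℝ) 3 := by
  intro x hx
  obtain ⟨i, hi⟩ := Set.mem_iUnion.1 hx
  simp only [Set.mem_preimage, Set.mem_singleton_iff] at hi
  constructor
  · by_contra h
    push_neg at h
    cases i with
    | zero => simp at hi; linarith
    | succ k =>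
      rw [Function.iterate_succ_apply] at hi
      have h3 : (3 : ℝ) < hanoiF x := by simp only [hanoiF]; nlinarith
      have := gt3 k _ h3
      rw [hi] at this; linarith
  · by_contra h
    push_neg at h
    have := gt3 i _ h
    rw [hi] at this; linarith

/-- the increasing inverse branch -/
noncomputable def g (y : ℝ) : ℝ := (1 + Real.sqrt (13 + 4 * y)) / 2

lemma f_g (y : ℝ) (hy : -13/4 ≤ y) : hanoiF (g y) = y := by
  have hnn : (0 : ℝ) ≤ 13 + 4 * y := by linarith
  have hs : Real.sqrt (13 + 4 * y) ^ 2 = 13 + 4 * y := Real.sq_sqrt hnn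
  simp only [hanoiF, g]
  nlinarith [hs]

noncomputable def a : ℕ → ℝ
  | 0 => 0
  | k + 1 => g (a k)

lemma a_prop : ∀ k, 0 ≤ a k ∧ a k ≤ 3 ∧ hanoiF^[k] (a k) = 0 := by
  intro k
  induction k with
  | zero => simp [a]
  | succ k ih =>
    obtain ⟨h0, h3, hiter⟩ := ih
    have hnn : (0 : ℝ) ≤ 13 + 4 * a k := by linarith
    have hs0 : 0 ≤ Real.sqrt (13 + 4 * a k) := Real.sqrt_nonneg _
    have hs5 : Real.sqrt (13 + 4 * a k) ≤ 5 := by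
      rw [show (5:ℝ) = Real.sqrt 25 by rw [show (25:ℝ) = 5^2 by norm_num, Real.sqrt_sq] ; norm_num]
      exact Real.sqrt_le_sqrt (by linarith)
    refine ⟨?_, ?_, ?_⟩
    · simp only [a, g]; linarith
    · simp only [a, g]; linarith
    · rw [Function.iterate_succ_apply]
      have : hanoiF (a (k+1)) = a k := by
        simp only [a]; exact f_g _ (by linarith)
      rw [this, hiter]

lemma a_conv : ∀ k, 3 - a k ≤ 3 * (1/2)^k := by
  intro k
  induction k with
  | zero => simp [a]
  | succ k ih =>
    obtain ⟨h0, h3, _⟩ := a_prop k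
    have hnn : (0 : ℝ) ≤ 13 + 4 * a k := by linarith
    have hs0 : 0 ≤ Real.sqrt (13 + 4 * a k) := Real.sqrt_nonneg _
    have hs : Real.sqrt (13 + 4 * a k) ^ 2 = 13 + 4 * a k := Real.sq_sqrt hnn
    have key : 3 - a (k+1) ≤ (3 - a k) / 2 := by
      simp only [a, g]
      -- 3 - (1+s)/2 = (5-s)/2 ; (5-s)(5+s) = 12 - 4 a k = 4 (3 - a k)
      nlinarith [hs, hs0]
    calc 3 - a (k+1) ≤ (3 - a k) / 2 := key
      _ ≤ (3 * (1/2)^k) / 2 := by linarith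
      _ = 3 * (1/2)^(k+1) := by ring

lemma a_tendsto : Filter.Tendsto a Filter.atTop (nhds 3) := by
  have h1 : Filter.Tendsto (fun k : ℕ => 3 - 3 * (1/2 : ℝ)^k) Filter.atTop (nhds 3) := by
    have := tendsto_pow_atTop_nhds_zero_of_lt_one (by norm_num : (0:ℝ) ≤ 1/2) (by norm_num : (1/2:ℝ) < 1)
    have := ((this.const_mul 3).const_sub 3)
    simpa using this
  have h2 : Filter.Tendsto (fun _ : ℕ => (3:ℝ)) Filter.atTop (nhds 3) := tendsto_const_nhds
  refine tendsto_of_tendsto_of_tendsto_of_le_of_le h1 h2 ?_ ?_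
  · intro k; have := a_conv k; show 3 - 3*(1/2:ℝ)^k ≤ a k; linarith
  · intro k; exact (a_prop k).2.1

lemma three_mem : (3 : ℝ) ∈ closure S := by
  rw [mem_closure_iff_seq_limit]
  refine ⟨a, ?_, a_tendsto⟩
  intro k
  exact Set.mem_iUnion.2 ⟨k, by simp [(a_prop k).2.2]⟩

lemma f_preimage_S {y : ℝ} (hy : y ∈ S) {x : ℝ} (hx : hanoiF x = y) : x ∈ S := by
  obtain ⟨i, hi⟩ := Set.mem_iUnion.1 hy
  simp only [Set.mem_preimage, Set.mem_singleton_iff] at hi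
  exact Set.mem_iUnion.2 ⟨i + 1, by
    simp only [Set.mem_preimage, Set.mem_singleton_iff, Function.iterate_succ_apply, hx, hi]⟩

lemma pullback {x : ℝ} (hx : x ≠ 1/2) (h : hanoiF x ∈ closure S) : x ∈ closure S := by
  obtain ⟨s, hsS, hslim⟩ := mem_closure_iff_seq_limit.1 h
  set σ : ℝ := if 1/2 < x then 1 else -1 with hσ
  have hσsq : σ ^ 2 = 1 := by rcases le_or_gt x (1/2) with h' | h' <;> simp [hσ] <;> split <;> norm_num
  set φ : ℝ → ℝ := fun t => (1 + σ * Real.sqrt (13 + 4 * t)) / 2 with hφ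
  have hφcont : Continuous φ := by
    apply Continuous.div_const
    exact continuous_const.add (continuous_const.mul (Real.continuous_sqrt.comp (by continuity)))
  have hφx : φ (hanoiF x) = x := by
    have h13 : 13 + 4 * hanoiF x = (2*x - 1)^2 := by simp only [hanoiF]; ring
    simp only [hφ, h13, Real.sqrt_sq_eq_abs]
    rcases lt_or_gt_of_ne hx with h' | h'
    · rw [abs_of_nonpos (by linarith)]; simp only [hσ, if_neg (not_lt.2 (le_of_lt h'))]; ring
    · rw [abs_of_nonneg (by linarith)]; simp only [hσ, if_pos h']; ring
  have hmem : ∀ k, φ (s k) ∈ S := by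
    intro k
    have hs2 := S_sub (hsS k)
    have hnn : (0:ℝ) ≤ 13 + 4 * s k := by
      have := hs2.1; linarith
    have : hanoiF (φ (s k)) = s k := by
      have hsq : Real.sqrt (13 + 4 * s k) ^ 2 = 13 + 4 * s k := Real.sq_sqrt hnn
      simp only [hanoiF, hφ]
      nlinarith [hsq, hσsq]
    exact f_preimage_S (hsS k) this
  rw [mem_closure_iff_seq_limit]
  refine ⟨fun k => φ (s k), hmem, ?_⟩
  have := (hφcont.tendsto (hanoiF x)).comp hslim
  rwa [hφx] at this

lemma not_iter_half : ∀ (n : ℕ), hanoiF^[n] (-13/4 : ℝ) ≠ 3 := by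
  intro n
  cases n with
  | zero => norm_num
  | succ k =>
    rw [Function.iterate_succ_apply]
    have hval : hanoiF (-13/4 : ℝ) = 173/16 := by simp only [hanoiF]; norm_num
    rw [hval]
    have := gt3 k (173/16 : ℝ) (by norm_num)
    linarith

lemma iter3 : ∀ (n : ℕ) (x : ℝ), hanoiF^[n] x = 3 → x ∈ closure S := by
  intro n
  induction n with
  | zero => intro x hx; simp at hx; rw [hx]; exact three_mem
  | succ n ih =>
    intro x hx
    rw [Function.iterate_succ_apply] at hx
    have hne : x ≠ 1/2 := by
      intro h
      rw [h] at hx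
      have : hanoiF (1/2 : ℝ) = -13/4 := by simp only [hanoiF]; norm_num
      rw [this] at hx
      exact not_iter_half n hx
    exact pullback hne (ih _ hx)

end HanoiAux

theorem hanoi_boundary_spectrum_closure :
    closure ({(3 : ℝ)} ∪ (⋃ i : ℕ, hanoiF^[i] ⁻¹' {(0 : ℝ)}) ∪
        ⋃ j : ℕ, hanoiF^[j] ⁻¹' {(-2 : ℝ)}) =
      closure (⋃ i : ℕ, hanoiF^[i] ⁻¹' {(0 : ℝ)}) := by
  apply le_antisymm
  · apply closure_minimal _ isClosed_closure
    rintro x ((h3 | hS) | hB)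
    · rw [Set.mem_singleton_iff] at h3
      rw [h3]; exact HanoiAux.three_mem
    · exact subset_closure hS
    · obtain ⟨j, hj⟩ := Set.mem_iUnion.1 hB
      simp only [Set.mem_preimage, Set.mem_singleton_iff] at hj
      apply HanoiAux.iter3 (j+1)
      rw [Function.iterate_succ_apply', hj]
      simp only [hanoiF]; norm_num
  · apply closure_mono
    exact (Set.subset_union_right).trans Set.subset_union_left |>.trans le_rfl
      |>.trans (le_refl _) |>.trans (by exact fun y hy => hy)
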